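/- arXiv:1402.5402 — 2 statements merged into one kernel-verified Lean document; each statement's English description precedes it below -/
import Mathlib

section
/- For the r-uniform hypergraph G_s^{(r)} consisting of two edges e, e' that intersect in exactly s vertices (2 ≤ s ≤ r−1), the weighted incidence matrix with B(v,f) = 1/2 for v ∈ e∩e' and B(v,f) = 1 for v ∈ f∖(e∩e') (f ∈ {e,e'}) satisfies: vertex sums equal 1, and each edge product equals (1/2)^s ≤ 1/4, with strict inequality iff s > 2. Consequently ρ(G_s^{(r)}) ≥ (r−1)!·4^{1/r}, with equality iff s = 2. -/
/-!
Put weight `1/2` on the incidences of the `s` shared vertices and `1` on the others: every vertex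
then carries total weight `1` and every edge has weight product `α = 2⁻ˢ`. Weighted AM-GM on each
edge, summed using the vertex weights, gives `α^{1/r} ∑_f ∏_{v ∈ f} x_v ≤ (∑_v x_v^r) / r`, i.e.
`ρ ≤ (r-1)! α^{-1/r}`. For `x_v = 2^{1/r}` on `e ∩ e'` and `1` elsewhere every weighted term
`B(v,f) x_v^r` equals `1`, so all AM-GM steps are equalities and `ρ = (r-1)! α^{-1/r}`; as
`α ≤ 1/4` with equality iff `s = 2`, the claims follow.
-/

open Finset

/-- Spectral radius of an `r`-uniform hypergraph with edge set `E`. -/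
noncomputable def specRad (r : ℕ) {V : Type} [Fintype V] (E : Finset (Finset V)) : ℝ :=
  sSup {ρ : ℝ | ∃ x : V → ℝ, (∀ v, 0 ≤ x v) ∧ x ≠ 0 ∧
    ρ = (Nat.factorial r : ℝ) * (∑ e ∈ E, ∏ v ∈ e, x v) / (∑ v, x v ^ r)}

section AMGM

variable {V : Type} {r : ℕ} {f : Finset V} {w x : V → ℝ}

lemma prod_mul_pow_rpow_inv (hr : r ≠ 0) (hw : ∀ v ∈ f, 0 ≤ w v) (hx : ∀ v ∈ f, 0 ≤ x v) :
    ∏ v ∈ f, (w v * x v ^ r) ^ (r⁻¹ : ℝ) = (∏ v ∈ f, w v) ^ (r⁻¹ : ℝ) * ∏ v ∈ f, x v := by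
  rw [Real.finsetProd_rpow f _ fun v hv => mul_nonneg (hw v hv) (pow_nonneg (hx v hv) r),
    prod_mul_distrib, prod_pow, Real.mul_rpow (prod_nonneg hw) (pow_nonneg (prod_nonneg hx) r),
    Real.pow_rpow_inv_natCast (prod_nonneg hx) hr]

lemma sum_inv_card_eq_one (hf : f.card = r) (hr : r ≠ 0) : ∑ _v ∈ f, (r⁻¹ : ℝ) = 1 := by
  rw [sum_const, hf, nsmul_eq_mul, mul_inv_cancel₀ (Nat.cast_ne_zero.2 hr)]

theorem rpow_prod_mul_prod_le (hf : f.card = r) (hr : r ≠ 0) (hw : ∀ v ∈ f, 0 ≤ w v)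
    (hx : ∀ v ∈ f, 0 ≤ x v) :
    (∏ v ∈ f, w v) ^ (r⁻¹ : ℝ) * ∏ v ∈ f, x v ≤ (∑ v ∈ f, w v * x v ^ r) / r := by
  rw [← prod_mul_pow_rpow_inv hr hw hx, div_eq_inv_mul, mul_sum]
  exact Real.geom_mean_le_arith_mean_weighted f _ _ (fun _ _ => by positivity)
    (sum_inv_card_eq_one hf hr) fun v hv => mul_nonneg (hw v hv) (pow_nonneg (hx v hv) r)

theorem rpow_prod_mul_prod_eq_of_const (hf : f.card = r) (hr : r ≠ 0) (hw : ∀ v ∈ f, 0 ≤ w v)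
    (hx : ∀ v ∈ f, 0 ≤ x v) {c : ℝ} (hc : ∀ v ∈ f, w v * x v ^ r = c) :
    (∏ v ∈ f, w v) ^ (r⁻¹ : ℝ) * ∏ v ∈ f, x v = (∑ v ∈ f, w v * x v ^ r) / r := by
  rw [← prod_mul_pow_rpow_inv hr hw hx, div_eq_inv_mul, mul_sum]
  exact Real.geom_mean_eq_arith_mean_weighted_of_constant f _ _ c (fun _ _ => by positivity)
    (sum_inv_card_eq_one hf hr) (fun v hv => mul_nonneg (hw v hv) (pow_nonneg (hx v hv) r))
    fun v hv _ => hc v hv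

end AMGM

lemma sum_pow_pos {V : Type} [Fintype V] {x : V → ℝ} {r : ℕ} (hx : ∀ v, 0 ≤ x v) (hx0 : x ≠ 0) :
    0 < ∑ v, x v ^ r := by
  obtain ⟨v, hv⟩ := Function.ne_iff.mp hx0
  exact sum_pos' (fun v _ => pow_nonneg (hx v) r)
    ⟨v, mem_univ v, pow_pos ((hx v).lt_of_ne (Ne.symm hv)) r⟩

section NormalLabeling

variable {V : Type} [DecidableEq V] {E : Finset (Finset V)} {B : V → Finset V → ℝ}
  {α : ℝ} {r : ℕ} {x : V → ℝ}

/-- The paper's `α`-normal labeling, with `B v f` the weight of the incidence `v ∈ f`. -/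
structure IsNormalLabeling (E : Finset (Finset V)) (B : V → Finset V → ℝ) (α : ℝ) : Prop where
  nonneg : ∀ v f, 0 ≤ B v f
  sum_eq_one : ∀ v, ∑ f ∈ E with v ∈ f, B v f = 1
  prod_eq : ∀ f ∈ E, ∏ v ∈ f, B v f = α

lemma IsNormalLabeling.rpow_mul_sum_prod (hB : IsNormalLabeling E B α) :
    α ^ (r⁻¹ : ℝ) * ∑ f ∈ E, ∏ v ∈ f, x v
      = ∑ f ∈ E, (∏ v ∈ f, B v f) ^ (r⁻¹ : ℝ) * ∏ v ∈ f, x v :=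
  mul_sum .. |>.trans <| sum_congr rfl fun f hf => by rw [hB.prod_eq f hf]

variable [Fintype V]

lemma sum_sum_mem_eq_sum_sum_filter (E : Finset (Finset V)) (g : V → Finset V → ℝ) :
    ∑ f ∈ E, ∑ v ∈ f, g v f = ∑ v, ∑ f ∈ E with v ∈ f, g v f :=
  sum_comm' fun f v => by simp

lemma IsNormalLabeling.sum_sum_mul (hB : IsNormalLabeling E B α) (y : V → ℝ) :
    ∑ f ∈ E, ∑ v ∈ f, B v f * y v = ∑ v, y v := by
  rw [sum_sum_mem_eq_sum_sum_filter]
  exact sum_congr rfl fun v _ => by rw [← sum_mul, hB.sum_eq_one, one_mul]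

theorem IsNormalLabeling.rpow_mul_sum_prod_le (hB : IsNormalLabeling E B α)
    (hE : ∀ f ∈ E, f.card = r) (hr : r ≠ 0) (hx : ∀ v, 0 ≤ x v) :
    α ^ (r⁻¹ : ℝ) * ∑ f ∈ E, ∏ v ∈ f, x v ≤ (∑ v, x v ^ r) / r :=
  calc α ^ (r⁻¹ : ℝ) * ∑ f ∈ E, ∏ v ∈ f, x v
      = ∑ f ∈ E, (∏ v ∈ f, B v f) ^ (r⁻¹ : ℝ) * ∏ v ∈ f, x v := hB.rpow_mul_sum_prod
    _ ≤ ∑ f ∈ E, (∑ v ∈ f, B v f * x v ^ r) / r := sum_le_sum fun f hf =>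
        rpow_prod_mul_prod_le (hE f hf) hr (fun v _ => hB.nonneg v f) fun v _ => hx v
    _ = (∑ v, x v ^ r) / r := by rw [← sum_div, hB.sum_sum_mul]

theorem IsNormalLabeling.rpow_mul_sum_prod_eq (hB : IsNormalLabeling E B α)
    (hE : ∀ f ∈ E, f.card = r) (hr : r ≠ 0) (hx : ∀ v, 0 ≤ x v)
    (hcons : ∀ f ∈ E, ∃ c, ∀ v ∈ f, B v f * x v ^ r = c) :
    α ^ (r⁻¹ : ℝ) * ∑ f ∈ E, ∏ v ∈ f, x v = (∑ v, x v ^ r) / r :=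
  calc α ^ (r⁻¹ : ℝ) * ∑ f ∈ E, ∏ v ∈ f, x v
      = ∑ f ∈ E, (∏ v ∈ f, B v f) ^ (r⁻¹ : ℝ) * ∏ v ∈ f, x v := hB.rpow_mul_sum_prod
    _ = ∑ f ∈ E, (∑ v ∈ f, B v f * x v ^ r) / r := sum_congr rfl fun f hf =>
        have ⟨_, hc⟩ := hcons f hf
        rpow_prod_mul_prod_eq_of_const (hE f hf) hr (fun v _ => hB.nonneg v f) (fun v _ => hx v) hc
    _ = (∑ v, x v ^ r) / r := by rw [← sum_div, hB.sum_sum_mul]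

/-- `hcons` is the paper's consistency of `B`: the vector `x` makes every AM-GM step an
equality. -/
theorem IsNormalLabeling.specRad_eq (hB : IsNormalLabeling E B α) (hα : 0 < α)
    (hE : ∀ f ∈ E, f.card = r) (hr : r ≠ 0) (hx : ∀ v, 0 ≤ x v) (hx0 : x ≠ 0)
    (hcons : ∀ f ∈ E, ∃ c, ∀ v ∈ f, B v f * x v ^ r = c) :
    specRad r E = (r - 1).factorial * (α ^ (r⁻¹ : ℝ))⁻¹ := by
  have hfac : (r.factorial : ℝ) = r * (r - 1).factorial := by
    rw [← Nat.mul_factorial_pred hr]; push_cast; ring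
  have ha : 0 < α ^ (r⁻¹ : ℝ) := Real.rpow_pos_of_pos hα _
  refine IsGreatest.csSup_eq ⟨⟨x, hx, hx0, ?_⟩, ?_⟩
  · have hP := (inv_mul_eq_iff_eq_mul₀ ha.ne').2 (hB.rpow_mul_sum_prod_eq hE hr hx hcons).symm
    rw [← hP, hfac]
    field_simp [(sum_pow_pos hx hx0).ne']
  · rintro _ ⟨y, hy, hy0, rfl⟩
    have hP := (le_inv_mul_iff₀ ha).2 (hB.rpow_mul_sum_prod_le hE hr hy)
    rw [div_le_iff₀ (sum_pow_pos hy hy0), hfac]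
    calc r * (r - 1).factorial * ∑ f ∈ E, ∏ v ∈ f, y v
        ≤ r * (r - 1).factorial * ((α ^ (r⁻¹ : ℝ))⁻¹ * ((∑ v, y v ^ r) / r)) := by gcongr
      _ = (r - 1).factorial * (α ^ (r⁻¹ : ℝ))⁻¹ * ∑ v, y v ^ r := by field_simp

end NormalLabeling

theorem isNormalLabeling_pair {V : Type} [DecidableEq V] {e e' : Finset V} {s : ℕ}
    (hne : e ≠ e') (hcov : ∀ v, v ∈ e ∨ v ∈ e') (hint : (e ∩ e').card = s) :
    IsNormalLabeling {e, e'} (fun v _ => if v ∈ e ∩ e' then (1 / 2 : ℝ) else 1) ((1 / 2) ^ s) where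
  nonneg v _ := by positivity
  sum_eq_one v := by
    by_cases h : v ∈ e <;> by_cases h' : v ∈ e' <;>
      simp [filter_insert, filter_singleton, h, h', hne]
    exact (hcov v).elim h h'
  prod_eq f hf := by
    have hsub : e ∩ e' ⊆ f := by
      rcases mem_insert.1 hf with rfl | hf
      · exact inter_subset_left
      rw [mem_singleton.1 hf]
      exact inter_subset_right
    rw [prod_ite_mem, inter_eq_right.2 hsub, prod_const, hint]

lemma strictAntiOn_inv_rpow_inv_natCast {r : ℕ} (hr : r ≠ 0) :
    StrictAntiOn (fun α : ℝ => (α ^ (r⁻¹ : ℝ))⁻¹) (Set.Ioi 0) := fun _ ha _ _ hab =>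
  inv_strictAnti₀ (Real.rpow_pos_of_pos ha _) (Real.rpow_lt_rpow ha.out.le hab (by positivity))

lemma half_ite_mul_rpow_ite_pow {V : Type} [DecidableEq V] {t : Finset V} {r : ℕ} (hr : r ≠ 0)
    (v : V) :
    (if v ∈ t then (1 / 2 : ℝ) else 1) * (if v ∈ t then (2 : ℝ) ^ (r⁻¹ : ℝ) else 1) ^ r = 1 := by
  split_ifs
  · rw [Real.rpow_inv_natCast_pow zero_le_two hr]; norm_num
  · simp

theorem two_edge_intersection_specRad_general (r s N : ℕ) (hs : 2 ≤ s)
    (e e' : Finset (Fin N)) (he : e.card = r) (he' : e'.card = r) (hne : e ≠ e')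
    (hint : (e ∩ e').card = s) (hcov : e ∪ e' = Finset.univ) :
    (∀ v : Fin N, ∑ f ∈ ({e, e'} : Finset (Finset (Fin N))).filter (fun f => v ∈ f),
        (if v ∈ e ∩ e' then (1/2 : ℝ) else 1) = 1) ∧
    (∀ f ∈ ({e, e'} : Finset (Finset (Fin N))),
        ∏ v ∈ f, (if v ∈ e ∩ e' then (1/2 : ℝ) else 1) = (1/2 : ℝ) ^ s) ∧
    ((1/2 : ℝ) ^ s ≤ 1/4) ∧ (((1/2 : ℝ) ^ s < 1/4) ↔ 2 < s) ∧
    (Nat.factorial (r - 1) : ℝ) * (4 : ℝ) ^ ((1 : ℝ) / r) ≤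
      specRad r ({e, e'} : Finset (Finset (Fin N))) ∧
    (specRad r ({e, e'} : Finset (Finset (Fin N))) =
        (Nat.factorial (r - 1) : ℝ) * (4 : ℝ) ^ ((1 : ℝ) / r) ↔ s = 2) := by
  have hsr : s ≤ r := hint ▸ he ▸ card_le_card inter_subset_left
  have hr : r ≠ 0 := by omega
  have hB := isNormalLabeling_pair hne (fun v => mem_union.1 (hcov ▸ mem_univ v)) hint
  obtain ⟨v₀, -⟩ := card_pos.1 (show 0 < e.card by omega)
  have hρ := hB.specRad_eq (x := fun v => if v ∈ e ∩ e' then (2 : ℝ) ^ (r⁻¹ : ℝ) else 1)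
    (by positivity) (by simp [he, he']) hr (fun v => by positivity)
    (Function.ne_iff.2 ⟨v₀, by positivity⟩)
    fun _ _ => ⟨1, fun v _ => half_ite_mul_rpow_ite_pow hr v⟩
  have h4 : (4 : ℝ) ^ ((1 : ℝ) / r) = (((1 / 2) ^ 2) ^ (r⁻¹ : ℝ))⁻¹ := by
    rw [← Real.inv_rpow (by norm_num)]; norm_num
  have hanti := strictAntiOn_inv_rpow_inv_natCast hr
  have hpos : ∀ n : ℕ, (1 / 2 : ℝ) ^ n ∈ Set.Ioi 0 := fun n => by simp
  have hle : (1 / 2 : ℝ) ^ s ≤ (1 / 2) ^ 2 := pow_le_pow_of_le_one (by norm_num) (by norm_num) hs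
  rw [h4, hρ, show (1 / 4 : ℝ) = (1 / 2) ^ 2 by norm_num]
  refine ⟨hB.sum_eq_one, hB.prod_eq, hle,
    pow_lt_pow_iff_right_of_lt_one₀ (by norm_num) (by norm_num), ?_, ?_⟩
  · exact mul_le_mul_of_nonneg_left ((hanti.le_iff_ge (hpos 2) (hpos s)).2 hle) (by positivity)
  · rw [mul_right_inj' (by positivity), hanti.injOn.eq_iff (hpos s) (hpos 2),
      pow_right_inj₀ (by norm_num) (by norm_num)]

/-- for two `r`-edges meeting in exactly `s` vertices (`2 ≤ s ≤ r−1`),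
the weights `1/2` on shared incidences and `1` elsewhere give vertex sums `1` and
edge products `(1/2)^s ≤ 1/4` (strict iff `s > 2`); consequently
`ρ(G_s^{(r)}) ≥ (r−1)!·4^{1/r}`, with equality iff `s = 2`. -/
theorem two_edge_intersection_specRad (r s N : ℕ) (hs : 2 ≤ s) (hsr : s ≤ r - 1)
    (e e' : Finset (Fin N)) (he : e.card = r) (he' : e'.card = r) (hne : e ≠ e')
    (hint : (e ∩ e').card = s) (hcov : e ∪ e' = Finset.univ) :
    (∀ v : Fin N, ∑ f ∈ ({e, e'} : Finset (Finset (Fin N))).filter (fun f => v ∈ f),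
        (if v ∈ e ∩ e' then (1/2 : ℝ) else 1) = 1) ∧
    (∀ f ∈ ({e, e'} : Finset (Finset (Fin N))),
        ∏ v ∈ f, (if v ∈ e ∩ e' then (1/2 : ℝ) else 1) = (1/2 : ℝ) ^ s) ∧
    ((1/2 : ℝ) ^ s ≤ 1/4) ∧ (((1/2 : ℝ) ^ s < 1/4) ↔ 2 < s) ∧
    (Nat.factorial (r - 1) : ℝ) * (4 : ℝ) ^ ((1 : ℝ) / r) ≤
      specRad r ({e, e'} : Finset (Finset (Fin N))) ∧
    (specRad r ({e, e'} : Finset (Finset (Fin N))) =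
        (Nat.factorial (r - 1) : ℝ) * (4 : ℝ) ^ ((1 : ℝ) / r) ↔ s = 2) :=
  two_edge_intersection_specRad_general r s N hs e e' he he' hne hint hcov
end

section
/- For r ≥ 5, (3/4)^r < 1/4. Consequently, the r-uniform 'edge-star' S_r^{(r)} — an edge F_0 = {v_1,…,v_r} with an additional edge F_i attached at each v_i (F_i pairwise disjoint outside F_0) — admits a strictly 1/4-supernormal labeling (B(v_i,F_i)=1/4, B(v_i,F_0)=3/4, leaves 1), hence ρ(S_r^{(r)}) > (r−1)!·4^{1/r} for r ≥ 5. -/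
/-!
The labeling puts `3/4` on the core edge, `1/4` on each pendant edge at its attachment vertex and
`1` at the leaves: every vertex sum is `1`, each pendant edge has product `1/4`, and the core edge
has product `(3/4)^r < 1/4`.

For the spectral radius it suffices to evaluate the Rayleigh quotient at the vector equal to
`c = 4^{1/r}` on the core edge and `1` on the `r(r-1)` leaves. Since `c^r = 4`, the quotient is
`r!(4 + rc)/(4r + r(r-1)) = (r-1)!(4 + rc)/(r + 3)`, which exceeds `(r-1)! c` exactly when
`3c < 4`, i.e. when `(4/3)^r > 4`, which is again `(3/4)^r < 1/4`.
-/

open Finset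

section SpectralRadius

variable {V : Type} [Fintype V] {r : ℕ} {E : Finset (Finset V)}

theorem prod_le_sum_pow_of_card_eq {e : Finset V} (he : e.card = r) {x : V → ℝ}
    (hx0 : ∀ w, 0 ≤ x w) (hx : x ≠ 0) : ∏ w ∈ e, x w ≤ ∑ w, x w ^ r := by
  have : Nonempty V := by
    obtain ⟨w, -⟩ := Function.ne_iff.mp hx
    exact ⟨w⟩
  obtain ⟨u, -, hu⟩ := exists_max_image univ x univ_nonempty
  calc ∏ w ∈ e, x w ≤ ∏ _w ∈ e, x u :=
        prod_le_prod (fun w _ => hx0 w) fun w _ => hu w (mem_univ w)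
    _ = x u ^ r := by rw [prod_const, he]
    _ ≤ ∑ w, x w ^ r := single_le_sum (fun w _ => pow_nonneg (hx0 w) r) (mem_univ u)

theorem le_specRad (hE : ∀ e ∈ E, e.card = r) {x : V → ℝ} (hx0 : ∀ w, 0 ≤ x w)
    (hx : x ≠ 0) :
    (r.factorial : ℝ) * (∑ e ∈ E, ∏ w ∈ e, x w) / (∑ w, x w ^ r) ≤ specRad r E := by
  refine le_csSup ⟨r.factorial * E.card, ?_⟩ ⟨x, hx0, hx, rfl⟩
  rintro _ ⟨y, hy0, hy, rfl⟩
  have hpos : 0 < ∑ w, y w ^ r := by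
    obtain ⟨w, hw⟩ := Function.ne_iff.mp hy
    exact sum_pos' (fun u _ => pow_nonneg (hy0 u) r)
      ⟨w, mem_univ w, pow_pos ((hy0 w).lt_of_ne' hw) r⟩
  have hsum : ∑ e ∈ E, ∏ w ∈ e, y w ≤ E.card * ∑ w, y w ^ r := by
    simpa using sum_le_sum fun e he => prod_le_sum_pow_of_card_eq (hE e he) hy0 hy
  rw [div_le_iff₀ hpos, mul_assoc]
  gcongr

end SpectralRadius

section EdgeStar

variable {V : Type} [DecidableEq V] {r : ℕ}

/-- `v` enumerates the core edge and `F i` is the pendant edge attached at `v i`; the vertices of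
`(F i).erase (v i)` are the leaves. -/
structure IsEdgeStar (v : Fin r → V) (F : Fin r → Finset V) : Prop where
  injective : Function.Injective v
  card_pendant : ∀ i, (F i).card = r
  core_inter_pendant : ∀ i, image v univ ∩ F i = {v i}
  pendant_inter_pendant : ∀ i j, i ≠ j → F i ∩ F j = ∅

def edgeStar (v : Fin r → V) (F : Fin r → Finset V) : Finset (Finset V) :=
  insert (image v univ) (image F univ)

variable {v : Fin r → V} {F : Fin r → Finset V}

theorem mem_core_or_mem_leaf (hcov : ∀ w : V, ∃ f ∈ edgeStar v F, w ∈ f) (w : V) :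
    w ∈ image v univ ∨ ∃ i, w ∈ (F i).erase (v i) := by
  obtain ⟨f, hf, hwf⟩ := hcov w
  simp only [edgeStar, mem_insert, mem_image, mem_univ, true_and] at hf
  obtain rfl | ⟨i, rfl⟩ := hf
  · exact Or.inl hwf
  by_cases hw : w = v i
  · exact Or.inl (hw ▸ mem_image_of_mem v (mem_univ i))
  · exact Or.inr ⟨i, mem_erase.mpr ⟨hw, hwf⟩⟩

namespace IsEdgeStar

theorem card_core (h : IsEdgeStar v F) : (image v univ).card = r := by
  rw [card_image_of_injective _ h.injective, card_univ, Fintype.card_fin]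

theorem mem_core_and_mem_pendant_iff (h : IsEdgeStar v F) {w : V} {i : Fin r} :
    w ∈ image v univ ∧ w ∈ F i ↔ w = v i := by
  rw [← mem_inter, h.core_inter_pendant i, mem_singleton]

theorem mem_pendant_self (h : IsEdgeStar v F) (i : Fin r) : v i ∈ F i :=
  (h.mem_core_and_mem_pendant_iff.mpr rfl).2

theorem eq_of_mem_pendant (h : IsEdgeStar v F) {i j : Fin r} (hi : v i ∈ F j) : i = j :=
  h.injective (h.mem_core_and_mem_pendant_iff.mp ⟨mem_image_of_mem v (mem_univ i), hi⟩)

theorem notMem_core (h : IsEdgeStar v F) {w : V} {i : Fin r} (hw : w ∈ (F i).erase (v i)) :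
    w ∉ image v univ :=
  fun hc => (ne_of_mem_erase hw) (h.mem_core_and_mem_pendant_iff.mp ⟨hc, mem_of_mem_erase hw⟩)

theorem eq_of_mem_pendant_of_mem_pendant (h : IsEdgeStar v F) {w : V} {i j : Fin r}
    (hi : w ∈ F i) (hj : w ∈ F j) : i = j := by
  by_contra hij
  simpa [h.pendant_inter_pendant i j hij] using mem_inter.mpr ⟨hi, hj⟩

theorem core_ne_pendant (h : IsEdgeStar v F) (hr : 2 ≤ r) (i : Fin r) : image v univ ≠ F i := by
  intro heq
  have := h.core_inter_pendant i
  rw [heq, inter_self] at this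
  have := h.card_pendant i
  simp_all
  omega

theorem pendant_injective (h : IsEdgeStar v F) (hr : 0 < r) : Function.Injective F := by
  intro i j hij
  by_contra hne
  have := h.pendant_inter_pendant i j hne
  rw [hij, inter_self] at this
  have := h.card_pendant j
  simp_all

theorem sum_edgeStar (h : IsEdgeStar v F) {M : Type*} [AddCommMonoid M] (hr : 2 ≤ r)
    (g : Finset V → M) :
    ∑ e ∈ edgeStar v F, g e = g (image v univ) + ∑ i, g (F i) := by
  rw [edgeStar, sum_insert, sum_image fun i _ j _ hij => h.pendant_injective (by omega) hij]
  simpa [eq_comm] using h.core_ne_pendant hr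

theorem card_of_mem_edgeStar (h : IsEdgeStar v F) {e : Finset V} (he : e ∈ edgeStar v F) :
    e.card = r := by
  simp only [edgeStar, mem_insert, mem_image, mem_univ, true_and] at he
  obtain rfl | ⟨i, rfl⟩ := he
  exacts [h.card_core, h.card_pendant i]

theorem filter_mem_core (h : IsEdgeStar v F) (i : Fin r) :
    (edgeStar v F).filter (v i ∈ ·) = {image v univ, F i} := by
  ext f
  simp only [edgeStar, mem_filter, mem_insert, mem_image, mem_univ, true_and, mem_singleton]
  constructor
  · rintro ⟨rfl | ⟨j, rfl⟩, hj⟩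
    exacts [Or.inl rfl, Or.inr (by rw [h.eq_of_mem_pendant hj])]
  · rintro (rfl | rfl)
    exacts [⟨Or.inl rfl, mem_image_of_mem v (mem_univ i)⟩,
      ⟨Or.inr ⟨i, rfl⟩, h.mem_pendant_self i⟩]

theorem filter_mem_leaf (h : IsEdgeStar v F) {w : V} {i : Fin r} (hw : w ∈ (F i).erase (v i)) :
    (edgeStar v F).filter (w ∈ ·) = {F i} := by
  ext f
  simp only [edgeStar, mem_filter, mem_insert, mem_image, mem_univ, true_and, mem_singleton]
  constructor
  · rintro ⟨rfl | ⟨j, rfl⟩, hwf⟩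
    exacts [absurd hwf (h.notMem_core hw),
      by rw [h.eq_of_mem_pendant_of_mem_pendant hwf (mem_of_mem_erase hw)]]
  · rintro rfl
    exact ⟨Or.inr ⟨i, rfl⟩, mem_of_mem_erase hw⟩

theorem sum_univ_eq_sum_core_add_sum_leaves (h : IsEdgeStar v F) [Fintype V] {M : Type*}
    [AddCommMonoid M] (hcov : ∀ w : V, ∃ f ∈ edgeStar v F, w ∈ f) (g : V → M) :
    ∑ w, g w = ∑ w ∈ image v univ, g w + ∑ i, ∑ w ∈ (F i).erase (v i), g w := by
  have hunion : (univ : Finset V) = image v univ ∪ univ.biUnion fun i => (F i).erase (v i) := by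
    ext w
    simpa using mem_core_or_mem_leaf hcov w
  have hdisj : Disjoint (image v univ) (univ.biUnion fun i => (F i).erase (v i)) := by
    simp only [disjoint_biUnion_right, mem_univ, forall_const]
    exact fun i => disjoint_right.mpr fun w hw => h.notMem_core hw
  have hpair :
      ((univ : Finset (Fin r)) : Set (Fin r)).PairwiseDisjoint fun i => (F i).erase (v i) :=
    fun i _ j _ hij => disjoint_left.mpr fun w hi hj =>
      hij (h.eq_of_mem_pendant_of_mem_pendant (mem_of_mem_erase hi) (mem_of_mem_erase hj))
  rw [hunion, sum_union hdisj, sum_biUnion hpair]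

end IsEdgeStar

noncomputable def starLabel (C : Finset V) (w : V) (f : Finset V) : ℝ :=
  if w ∈ f then if f = C then 3 / 4 else if w ∈ C then 1 / 4 else 1 else 0

theorem starLabel_pos {C f : Finset V} {w : V} (hw : w ∈ f) : 0 < starLabel C w f := by
  unfold starLabel; split_ifs <;> norm_num

theorem starLabel_of_notMem {C f : Finset V} {w : V} (hw : w ∉ f) : starLabel C w f = 0 :=
  if_neg hw

theorem starLabel_self {C : Finset V} {w : V} (hw : w ∈ C) : starLabel C w C = 3 / 4 := by
  simp [starLabel, hw]

namespace IsEdgeStar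

theorem starLabel_core_pendant (h : IsEdgeStar v F) (hr : 2 ≤ r) (i : Fin r) :
    starLabel (image v univ) (v i) (F i) = 1 / 4 := by
  simp [starLabel, h.mem_pendant_self i, (h.core_ne_pendant hr i).symm]

theorem starLabel_leaf_pendant (h : IsEdgeStar v F) (hr : 2 ≤ r) {w : V} {i : Fin r}
    (hw : w ∈ (F i).erase (v i)) : starLabel (image v univ) w (F i) = 1 := by
  simp only [starLabel, if_pos (mem_of_mem_erase hw), if_neg (h.core_ne_pendant hr i).symm,
    if_neg (h.notMem_core hw)]

theorem sum_starLabel (h : IsEdgeStar v F) (hr : 2 ≤ r)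
    (hcov : ∀ w : V, ∃ f ∈ edgeStar v F, w ∈ f) (w : V) :
    ∑ f ∈ (edgeStar v F).filter (w ∈ ·), starLabel (image v univ) w f = 1 := by
  obtain hw | ⟨i, hw⟩ := mem_core_or_mem_leaf hcov w
  · obtain ⟨i, -, rfl⟩ := mem_image.mp hw
    rw [h.filter_mem_core i, sum_pair (h.core_ne_pendant hr i), starLabel_self hw,
      h.starLabel_core_pendant hr i]
    norm_num
  · rw [h.filter_mem_leaf hw, sum_singleton, h.starLabel_leaf_pendant hr hw]

theorem prod_starLabel_core (h : IsEdgeStar v F) :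
    ∏ w ∈ image v univ, starLabel (image v univ) w (image v univ) = (3 / 4) ^ r := by
  rw [prod_congr rfl fun w => starLabel_self, prod_const, h.card_core]

theorem prod_starLabel_pendant (h : IsEdgeStar v F) (hr : 2 ≤ r) (i : Fin r) :
    ∏ w ∈ F i, starLabel (image v univ) w (F i) = 1 / 4 := by
  rw [← mul_prod_erase _ _ (h.mem_pendant_self i), h.starLabel_core_pendant hr i,
    prod_eq_one fun w hw => h.starLabel_leaf_pendant hr hw, mul_one]

theorem prod_starLabel_le (h : IsEdgeStar v F) (hr : 2 ≤ r) (hpow : (3 / 4 : ℝ) ^ r ≤ 1 / 4)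
    {f : Finset V} (hf : f ∈ edgeStar v F) :
    ∏ w ∈ f, starLabel (image v univ) w f ≤ 1 / 4 := by
  simp only [edgeStar, mem_insert, mem_image, mem_univ, true_and] at hf
  obtain rfl | ⟨i, rfl⟩ := hf
  exacts [h.prod_starLabel_core ▸ hpow, (h.prod_starLabel_pendant hr i).le]

end IsEdgeStar

def starVector (C : Finset V) (c : ℝ) (w : V) : ℝ :=
  if w ∈ C then c else 1

theorem starVector_of_mem {C : Finset V} {c : ℝ} {w : V} (hw : w ∈ C) : starVector C c w = c :=
  if_pos hw

theorem starVector_of_notMem {C : Finset V} {c : ℝ} {w : V} (hw : w ∉ C) :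
    starVector C c w = 1 :=
  if_neg hw

theorem starVector_nonneg {C : Finset V} {c : ℝ} (hc : 0 ≤ c) (w : V) :
    0 ≤ starVector C c w := by
  unfold starVector; split_ifs <;> norm_num [hc]

theorem starVector_ne_zero [Nonempty V] {C : Finset V} {c : ℝ} (hc : c ≠ 0) :
    starVector C c ≠ 0 := by
  intro h0
  have := congrFun h0 (Classical.arbitrary V)
  unfold starVector at this; split_ifs at this <;> simp_all

namespace IsEdgeStar

theorem prod_starVector_pendant (h : IsEdgeStar v F) (c : ℝ) (i : Fin r) :
    ∏ w ∈ F i, starVector (image v univ) c w = c := by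
  rw [← mul_prod_erase _ _ (h.mem_pendant_self i),
    prod_eq_one fun w hw => starVector_of_notMem (h.notMem_core hw), mul_one]
  exact starVector_of_mem (mem_image_of_mem v (mem_univ i))

theorem sum_prod_starVector (h : IsEdgeStar v F) (hr : 2 ≤ r) (c : ℝ) :
    ∑ e ∈ edgeStar v F, ∏ w ∈ e, starVector (image v univ) c w = c ^ r + r * c := by
  rw [h.sum_edgeStar hr, prod_congr rfl fun w => starVector_of_mem, prod_const, h.card_core]
  simp [h.prod_starVector_pendant]

theorem sum_starVector_pow [Fintype V] (h : IsEdgeStar v F) (hr : 0 < r)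
    (hcov : ∀ w : V, ∃ f ∈ edgeStar v F, w ∈ f) (c : ℝ) :
    ∑ w, starVector (image v univ) c w ^ r = r * c ^ r + r * (r - 1) := by
  rw [h.sum_univ_eq_sum_core_add_sum_leaves hcov,
    sum_congr rfl fun w hw => by rw [starVector_of_mem hw],
    sum_congr rfl fun _ _ => sum_congr rfl fun w hw => by
      rw [starVector_of_notMem (h.notMem_core hw)]]
  simp [card_erase_of_mem (h.mem_pendant_self _), h.card_pendant, h.card_core, Nat.cast_sub hr]
  ring

end IsEdgeStar

end EdgeStar

theorem three_quarters_pow_lt_quarter {r : ℕ} (hr : 5 ≤ r) : (3 / 4 : ℝ) ^ r < 1 / 4 :=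
  calc (3 / 4 : ℝ) ^ r ≤ (3 / 4) ^ 5 := pow_le_pow_of_le_one (by norm_num) (by norm_num) hr
    _ < 1 / 4 := by norm_num

theorem three_mul_lt_four_of_pow_eq {r : ℕ} {c : ℝ} (hcr : c ^ r = 4)
    (h : (3 / 4 : ℝ) ^ r < 1 / 4) : 3 * c < 4 := by
  refine lt_of_pow_lt_pow_left₀ r (by norm_num) ?_
  rw [mul_pow, hcr]
  calc (3 : ℝ) ^ r * 4 = 4 ^ r * ((3 / 4) ^ r * 4) := by rw [div_pow]; field_simp
    _ < 4 ^ r * 1 := by gcongr; linarith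
    _ = 4 ^ r := mul_one _

theorem factorial_pred_mul_lt {r : ℕ} {c : ℝ} (hr : 0 < r) (h3c : 3 * c < 4) :
    ((r - 1).factorial : ℝ) * c < r.factorial * (4 + r * c) / (r * 4 + r * (r - 1)) := by
  have hr' : (1 : ℝ) ≤ r := by exact_mod_cast hr
  rw [lt_div_iff₀ (by nlinarith), ← Nat.mul_factorial_pred hr.ne', Nat.cast_mul]
  have : (0 : ℝ) < (r - 1).factorial := by positivity
  nlinarith [mul_pos (mul_pos this (by linarith : (0 : ℝ) < r))
    (by linarith : (0 : ℝ) < 4 - 3 * c)]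

/-- for `r ≥ 5` we have `(3/4)^r < 1/4`; consequently the `r`-uniform
edge-star `S_r^{(r)}` admits a strictly 1/4-supernormal labeling and its spectral
radius exceeds `(r−1)!·4^{1/r}`. -/
theorem edgeStar_strictly_supernormal (r N : ℕ) (hr : 5 ≤ r)
    (v : Fin r → Fin N) (hv : Function.Injective v)
    (F : Fin r → Finset (Fin N))
    (hcard : ∀ i, (F i).card = r)
    (hvF : ∀ i, Finset.image v Finset.univ ∩ F i = {v i})
    (hFF : ∀ i j, i ≠ j → F i ∩ F j = ∅)
    (E : Finset (Finset (Fin N)))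
    (hE : E = insert (Finset.image v Finset.univ) (Finset.image F Finset.univ))
    (hcov : ∀ w : Fin N, ∃ f ∈ E, w ∈ f) :
    ((3/4 : ℝ)) ^ r < 1/4 ∧
    (∃ B : Fin N → Finset (Fin N) → ℝ,
      (∀ w f, f ∈ E → w ∈ f → 0 < B w f) ∧
      (∀ w f, w ∉ f → B w f = 0) ∧
      (∀ w : Fin N, ∑ f ∈ E.filter (fun f => w ∈ f), B w f = 1) ∧
      (∀ f ∈ E, ∏ w ∈ f, B w f ≤ 1/4) ∧
      (∃ f ∈ E, ∏ w ∈ f, B w f < 1/4)) ∧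
    (Nat.factorial (r - 1) : ℝ) * (4 : ℝ) ^ ((1 : ℝ) / r) < specRad r E := by
  have h : IsEdgeStar v F := ⟨hv, hcard, hvF, hFF⟩
  have hr0 : 0 < r := by omega
  have hr2 : 2 ≤ r := by omega
  have hpow := three_quarters_pow_lt_quarter hr
  change E = edgeStar v F at hE
  subst hE
  refine ⟨hpow, ⟨starLabel (image v univ), fun _ _ _ => starLabel_pos,
    fun _ _ => starLabel_of_notMem, h.sum_starLabel hr2 hcov,
    fun _ => h.prod_starLabel_le hr2 hpow.le,
    ⟨_, mem_insert_self _ _, h.prod_starLabel_core ▸ hpow⟩⟩, ?_⟩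
  set c : ℝ := (4 : ℝ) ^ ((1 : ℝ) / r)
  have hc : 0 < c := by positivity
  have hcr : c ^ r = 4 := by
    simpa only [c, one_div] using Real.rpow_inv_natCast_pow (by norm_num : (0 : ℝ) ≤ 4) hr0.ne'
  have : Nonempty (Fin N) := ⟨v ⟨0, hr0⟩⟩
  calc ((r - 1).factorial : ℝ) * c
      < r.factorial * (4 + r * c) / (r * 4 + r * (r - 1)) :=
        factorial_pred_mul_lt hr0 (three_mul_lt_four_of_pow_eq hcr hpow)
    _ = r.factorial * (∑ e ∈ edgeStar v F, ∏ w ∈ e, starVector (image v univ) c w) /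
          ∑ w, starVector (image v univ) c w ^ r := by
        rw [h.sum_prod_starVector hr2, h.sum_starVector_pow hr0 hcov, hcr]
    _ ≤ specRad r (edgeStar v F) :=
        le_specRad (fun _ => h.card_of_mem_edgeStar) (starVector_nonneg hc.le)
          (starVector_ne_zero hc.ne')
end
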